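/- arXiv:2305.18436 — 2 statements merged into one kernel-verified Lean document; each statement's English description precedes it below -/
import Mathlib

section
/- Let L ≥ 0, β ≥ 0, and let U, U' ∈ ℝ^{n×r} satisfy ‖U − U'‖_F ≤ 1, ‖U'‖_op ≤ 1, and U'(U')ᵀ1_n = 1_n. Then ‖g(U) − g(U')‖_F ≤ ( ‖2A + y1_nᵀ + 1_n yᵀ‖_F + 2L + 12 n β ) · ‖U − U'‖_F. -/
/-! At `U'` the multiplier `ȳ` reduces to `y`, since `U'U'ᵀ1 = 1`. Writing `J = 11ᵀ` and
`Δ = UUᵀ - U'U'ᵀ`, the difference therefore splits as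
`g(U) - g(U') = (2A + y1ᵀ + 1yᵀ)(U - U') + 2L(U - U') + β(JΔ + ΔJ)U`.
The first two terms give the linear part of the constant. For the third, the mixed bounds
`‖XY‖_F ≤ ‖X‖_op‖Y‖_F` and `‖XY‖_F ≤ ‖X‖_F‖Y‖_op` together with `‖J‖_F = n`, `‖U‖_op ≤ 2` and
`‖Δ‖_op ≤ (‖U‖_op + ‖U'‖_op)‖U - U'‖_op ≤ 3‖U - U'‖_F` give `2n · 3 · 2 = 12n`. -/

open Matrix Finset

/-- The all-ones vector in `ℝ^n`. -/
noncomputable def ones (n : ℕ) : Fin n → ℝ := fun _ => 1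

/-- Frobenius norm of a real matrix. -/
noncomputable def frob {m r : ℕ} (M : Matrix (Fin m) (Fin r) ℝ) : ℝ :=
  Real.sqrt (∑ i, ∑ j, (M i j) ^ 2)

/-- The `ℓ²→ℓ²` operator (spectral) norm of a real matrix. -/
noncomputable def opNorm {m n : ℕ} (M : Matrix (Fin m) (Fin n) ℝ) : ℝ :=
  ‖LinearMap.toContinuousLinearMap (Matrix.toEuclideanLin (𝕜 := ℝ) M)‖

/-- The gradient map `g(U) = (2A + 2L·I + 1 ȳᵀ + ȳ 1ᵀ) U`
with `ȳ = y + β(UUᵀ1 − 1)`. -/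
noncomputable def gradLag {n r : ℕ} (A : Matrix (Fin n) (Fin n) ℝ) (y : Fin n → ℝ)
    (L β : ℝ) (U : Matrix (Fin n) (Fin r) ℝ) : Matrix (Fin n) (Fin r) ℝ :=
  ((2 : ℝ) • A + (2 * L) • (1 : Matrix (Fin n) (Fin n) ℝ)
    + Matrix.vecMulVec (ones n) (y + β • ((U * Uᵀ).mulVec (ones n) - ones n))
    + Matrix.vecMulVec (y + β • ((U * Uᵀ).mulVec (ones n) - ones n)) (ones n)) * U

section MatrixNorms

variable {m n k : ℕ}

section Frobenius

attribute [local instance] Matrix.frobeniusNormedAddCommGroup Matrix.frobeniusNormedSpace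

lemma frob_eq_norm (M : Matrix (Fin m) (Fin n) ℝ) : frob M = ‖M‖ := by
  simp [frob, Matrix.frobenius_norm_def, Real.sqrt_eq_rpow]

lemma frob_add_le (X Y : Matrix (Fin m) (Fin n) ℝ) : frob (X + Y) ≤ frob X + frob Y := by
  simpa only [frob_eq_norm] using norm_add_le X Y

lemma frob_smul_of_nonneg {c : ℝ} (hc : 0 ≤ c) (M : Matrix (Fin m) (Fin n) ℝ) :
    frob (c • M) = c * frob M := by
  simp only [frob_eq_norm, norm_smul, Real.norm_of_nonneg hc]

lemma frob_transpose (M : Matrix (Fin m) (Fin n) ℝ) : frob Mᵀ = frob M := by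
  simp only [frob_eq_norm, Matrix.frobenius_norm_transpose]

lemma norm_mulVec_le_frob_mul (M : Matrix (Fin m) (Fin n) ℝ) (x : Fin n → ℝ) :
    ‖WithLp.toLp 2 (M *ᵥ x)‖ ≤ frob M * ‖WithLp.toLp 2 x‖ := by
  simpa only [frob_eq_norm, ← Matrix.frobenius_norm_replicateCol (ι := Unit),
    Matrix.replicateCol_mulVec] using Matrix.frobenius_norm_mul M (Matrix.replicateCol Unit x)

end Frobenius

section OperatorNorm

open scoped Matrix.Norms.L2Operator

lemma opNorm_eq_norm (M : Matrix (Fin m) (Fin n) ℝ) : opNorm M = ‖M‖ := rfl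

lemma norm_mulVec_le_opNorm_mul (M : Matrix (Fin m) (Fin n) ℝ) (x : Fin n → ℝ) :
    ‖WithLp.toLp 2 (M *ᵥ x)‖ ≤ opNorm M * ‖WithLp.toLp 2 x‖ :=
  M.l2_opNorm_mulVec (WithLp.toLp 2 x)

lemma opNorm_add_le (X Y : Matrix (Fin m) (Fin n) ℝ) : opNorm (X + Y) ≤ opNorm X + opNorm Y :=
  norm_add_le X Y

lemma opNorm_mul_le (X : Matrix (Fin m) (Fin n) ℝ) (Y : Matrix (Fin n) (Fin k) ℝ) :
    opNorm (X * Y) ≤ opNorm X * opNorm Y :=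
  Matrix.l2_opNorm_mul X Y

lemma opNorm_transpose (M : Matrix (Fin m) (Fin n) ℝ) : opNorm Mᵀ = opNorm M := by
  simpa only [opNorm_eq_norm, Matrix.conjTranspose_eq_transpose_of_trivial]
    using Matrix.l2_opNorm_conjTranspose M

lemma opNorm_le_frob (M : Matrix (Fin m) (Fin n) ℝ) : opNorm M ≤ frob M :=
  ContinuousLinearMap.opNorm_le_bound _ (Real.sqrt_nonneg _) fun x =>
    norm_mulVec_le_frob_mul M x.ofLp

end OperatorNorm

lemma frob_sq_eq_sum_norm_col (M : Matrix (Fin m) (Fin n) ℝ) :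
    frob M ^ 2 = ∑ j, ‖WithLp.toLp 2 (Mᵀ j)‖ ^ 2 := by
  rw [frob, Real.sq_sqrt (by positivity), Finset.sum_comm]
  simp [EuclideanSpace.norm_sq_eq]

lemma frob_mul_le_opNorm_mul (X : Matrix (Fin m) (Fin n) ℝ)
    (Y : Matrix (Fin n) (Fin k) ℝ) : frob (X * Y) ≤ opNorm X * frob Y := by
  have hcol : ∀ j, (X * Y)ᵀ j = X *ᵥ Yᵀ j := fun j => by
    ext i; simp [Matrix.mul_apply, Matrix.mulVec, dotProduct]
  refine le_of_sq_le_sq ?_ (mul_nonneg (norm_nonneg _) (Real.sqrt_nonneg _))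
  rw [mul_pow, frob_sq_eq_sum_norm_col, frob_sq_eq_sum_norm_col, Finset.mul_sum]
  refine Finset.sum_le_sum fun j _ => ?_
  rw [hcol, ← mul_pow]
  exact pow_le_pow_left₀ (norm_nonneg _) (norm_mulVec_le_opNorm_mul X _) 2

lemma frob_mul_le_mul_opNorm (X : Matrix (Fin m) (Fin n) ℝ)
    (Y : Matrix (Fin n) (Fin k) ℝ) : frob (X * Y) ≤ frob X * opNorm Y := by
  simpa only [← frob_transpose (X * Y), Matrix.transpose_mul, frob_transpose, opNorm_transpose,
    mul_comm (opNorm Y)] using frob_mul_le_opNorm_mul Yᵀ Xᵀ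

end MatrixNorms

noncomputable def onesMat (n : ℕ) : Matrix (Fin n) (Fin n) ℝ := vecMulVec (ones n) (ones n)

lemma frob_onesMat (n : ℕ) : frob (onesMat n) = n := by
  simp [frob, onesMat, ones, Matrix.vecMulVec_apply]

lemma frob_onesMat_mul_add_mul_onesMat_le {n : ℕ} (M : Matrix (Fin n) (Fin n) ℝ) :
    frob (onesMat n * M + M * onesMat n) ≤ 2 * n * opNorm M :=
  calc frob (onesMat n * M + M * onesMat n)
      ≤ frob (onesMat n) * opNorm M + opNorm M * frob (onesMat n) :=
        (frob_add_le _ _).trans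
          (add_le_add (frob_mul_le_mul_opNorm _ _) (frob_mul_le_opNorm_mul _ _))
    _ = 2 * n * opNorm M := by rw [frob_onesMat]; ring

lemma opNorm_mul_transpose_sub_le {n r : ℕ} (U U' : Matrix (Fin n) (Fin r) ℝ) :
    opNorm (U * Uᵀ - U' * U'ᵀ) ≤ (opNorm U + opNorm U') * opNorm (U - U') := by
  have hsplit : U * Uᵀ - U' * U'ᵀ = (U - U') * Uᵀ + U' * (U - U')ᵀ := by
    simp only [Matrix.sub_mul, Matrix.mul_sub, Matrix.transpose_sub]; abel
  calc opNorm (U * Uᵀ - U' * U'ᵀ)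
      ≤ opNorm (U - U') * opNorm Uᵀ + opNorm U' * opNorm (U - U')ᵀ := by
        rw [hsplit]
        exact (opNorm_add_le _ _).trans (add_le_add (opNorm_mul_le _ _) (opNorm_mul_le _ _))
    _ = (opNorm U + opNorm U') * opNorm (U - U') := by
        rw [opNorm_transpose, opNorm_transpose]; ring

lemma gradLag_sub_gradLag {n r : ℕ} (A : Matrix (Fin n) (Fin n) ℝ) (y : Fin n → ℝ) (L β : ℝ)
    (U U' : Matrix (Fin n) (Fin r) ℝ) (hrow : (U' * U'ᵀ) *ᵥ ones n = ones n) :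
    gradLag A y L β U - gradLag A y L β U' =
      ((2 : ℝ) • A + vecMulVec y (ones n) + vecMulVec (ones n) y) * (U - U')
        + (2 * L) • (U - U')
        + β • ((onesMat n * (U * Uᵀ - U' * U'ᵀ) + (U * Uᵀ - U' * U'ᵀ) * onesMat n) * U) := by
  set Δ := U * Uᵀ - U' * U'ᵀ
  have hΔ : Δᵀ = Δ := by simp [Δ, Matrix.transpose_sub, Matrix.transpose_mul]
  have hv : (U * Uᵀ) *ᵥ ones n - ones n = Δ *ᵥ ones n := by
    rw [Matrix.sub_mulVec, hrow]
  have hleft : vecMulVec (ones n) (Δ *ᵥ ones n) = onesMat n * Δ := by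
    rw [onesMat, Matrix.vecMulVec_mul, ← Matrix.mulVec_transpose, hΔ]
  have hright : vecMulVec (Δ *ᵥ ones n) (ones n) = Δ * onesMat n := by
    rw [onesMat, Matrix.mul_vecMulVec]
  simp only [gradLag, hrow, sub_self, smul_zero, add_zero, hv, vecMulVec_add, add_vecMulVec,
    vecMulVec_smul, smul_vecMulVec, hleft, hright]
  simp only [Matrix.add_mul, Matrix.mul_sub, Matrix.smul_mul, Matrix.one_mul, smul_add, smul_sub]
  abel

theorem grad_local_lipschitz_general {n r : ℕ}
    (A : Matrix (Fin n) (Fin n) ℝ)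
    (y : Fin n → ℝ) (L β : ℝ) (hL : 0 ≤ L) (hβ : 0 ≤ β)
    (U U' : Matrix (Fin n) (Fin r) ℝ)
    (hclose : frob (U - U') ≤ 1)
    (hop : opNorm U' ≤ 1)
    (hrow : (U' * U'ᵀ).mulVec (ones n) = ones n) :
    frob (gradLag A y L β U - gradLag A y L β U') ≤
      (frob ((2 : ℝ) • A + Matrix.vecMulVec y (ones n) + Matrix.vecMulVec (ones n) y)
          + 2 * L + 12 * n * β) * frob (U - U') := by
  set d := frob (U - U')
  have hd : 0 ≤ d := Real.sqrt_nonneg _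
  have hD : opNorm (U - U') ≤ d := opNorm_le_frob _
  have hU : opNorm U ≤ 2 :=
    calc opNorm U = opNorm (U' + (U - U')) := by rw [add_sub_cancel]
      _ ≤ opNorm U' + opNorm (U - U') := opNorm_add_le _ _
      _ ≤ 2 := by linarith
  have hΔ : opNorm (U * Uᵀ - U' * U'ᵀ) ≤ 3 * d :=
    (opNorm_mul_transpose_sub_le U U').trans
      (mul_le_mul (by linarith) hD (norm_nonneg _) (by norm_num))
  have hcorr : frob ((onesMat n * (U * Uᵀ - U' * U'ᵀ) + (U * Uᵀ - U' * U'ᵀ) * onesMat n) * U)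
      ≤ 12 * n * d :=
    calc _ ≤ 2 * n * (3 * d) * 2 :=
          (frob_mul_le_mul_opNorm _ _).trans <| mul_le_mul
            ((frob_onesMat_mul_add_mul_onesMat_le _).trans (by gcongr)) hU (norm_nonneg _)
            (by positivity)
      _ = 12 * n * d := by ring
  rw [gradLag_sub_gradLag A y L β U U' hrow]
  calc _ ≤ frob (((2 : ℝ) • A + vecMulVec y (ones n) + vecMulVec (ones n) y) * (U - U'))
          + frob ((2 * L) • (U - U'))
          + frob (β • ((onesMat n * (U * Uᵀ - U' * U'ᵀ) + (U * Uᵀ - U' * U'ᵀ) * onesMat n) * U)) :=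
        (frob_add_le _ _).trans (add_le_add_left (frob_add_le _ _) _)
    _ ≤ frob ((2 : ℝ) • A + vecMulVec y (ones n) + vecMulVec (ones n) y) * d + 2 * L * d
          + β * (12 * n * d) := by
        rw [frob_smul_of_nonneg (by positivity), frob_smul_of_nonneg hβ]
        gcongr
        exact (frob_mul_le_mul_opNorm _ _).trans
          (mul_le_mul_of_nonneg_left hD (Real.sqrt_nonneg _))
    _ = _ := by ring

/-- Local Lipschitz bound for the gradient map: if `L ≥ 0`, `β ≥ 0`,
`‖U − U'‖_F ≤ 1`, `‖U'‖_op ≤ 1`, and `U'(U')ᵀ1 = 1`, then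
`‖g(U) − g(U')‖_F ≤ (‖2A + y1ᵀ + 1yᵀ‖_F + 2L + 12nβ)‖U − U'‖_F`. -/
theorem grad_local_lipschitz {n r : ℕ}
    (A : Matrix (Fin n) (Fin n) ℝ) (hA : Aᵀ = A)
    (y : Fin n → ℝ) (L β : ℝ) (hL : 0 ≤ L) (hβ : 0 ≤ β)
    (U U' : Matrix (Fin n) (Fin r) ℝ)
    (hclose : frob (U - U') ≤ 1)
    (hop : opNorm U' ≤ 1)
    (hrow : (U' * U'ᵀ).mulVec (ones n) = ones n) :
    frob (gradLag A y L β U - gradLag A y L β U') ≤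
      (frob ((2 : ℝ) • A + Matrix.vecMulVec y (ones n) + Matrix.vecMulVec (ones n) y)
          + 2 * L + 12 * n * β) * frob (U - U') :=
  grad_local_lipschitz_general A y L β hL hβ U U' hclose hop hrow
end

section
/- Let K ≥ 1 be an integer, λ > L, R₁ ≥ 0, G_c ≥ 0, and let Q ∈ ℝ^{r×r} be orthogonal. Let U* ∈ ℝ^{n×r} with ‖U*‖_F² = K, and suppose g(U*) = −2(λ−L)U* + N where N ∈ ℝ^{n×r} vanishes on the support of U* (i.e., N_{iτ} = 0 whenever (U*)_{iτ} ≠ 0) and ‖N‖_F ≤ G_c. Let U ∈ ℝ^{n×r} with ‖U‖_F² = K, and suppose ‖g(U) − g(U*Q)‖_F ≤ R₁‖U − U*Q‖_F and ‖U − U*Q‖_F ≤ (λ−L)√K / ( 2( √K·R₁ + 2(λ−L)√K + G_c ) ). Then ⟨g(U), U⟩ < −(λ−L)K/2. -/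
open Matrix Finset

/-- Trace (Frobenius) inner product of two real matrices. -/
noncomputable def matInner {m r : ℕ} (M N : Matrix (Fin m) (Fin r) ℝ) : ℝ :=
  ∑ i, ∑ j, M i j * N i j

/-!
Expand `⟨g(U), U⟩` around the point `U*Q` of the optimal orbit:
`⟨g(U), U⟩ = ⟨g(U) − g(U*Q), U⟩ + ⟨g(U*Q), U − U*Q⟩ + ⟨g(U*Q), U*Q⟩`.
Since `g(U*Q) = g(U*)Q` and `Q` is orthogonal, the last term is `⟨g(U*), U*⟩ = −2(λ−L)K`
(`N` is orthogonal to `U*` because their supports are disjoint), and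
`‖g(U*Q)‖_F ≤ 2(λ−L)√K + G_c`. By Cauchy–Schwarz the first two terms are at most
`‖U − U*Q‖_F (√K·R₁ + 2(λ−L)√K + G_c) ≤ (λ−L)√K/2 ≤ (λ−L)K/2`, which leaves
`⟨g(U), U⟩ ≤ −3(λ−L)K/2`.
-/

lemma le_half_of_le_div_two_mul {d c S : ℝ} (hd : 0 ≤ d) (hc : 0 ≤ c) (h : d ≤ c / (2 * S)) :
    d * S ≤ c / 2 := by
  rcases le_or_gt S 0 with hS | hS
  · nlinarith
  · calc d * S ≤ c / (2 * S) * S := mul_le_mul_of_nonneg_right h hS.le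
      _ = c / 2 := by field_simp

lemma real_inner_le_inner_add_norm_mul {E : Type*} [NormedAddCommGroup E] [InnerProductSpace ℝ E]
    (g u g' v : E) : inner ℝ g u ≤ inner ℝ g' v + ‖g - g'‖ * ‖u‖ + ‖g'‖ * ‖u - v‖ := by
  have hsplit : inner ℝ g u = inner ℝ (g - g') u + inner ℝ g' (u - v) + inner ℝ g' v := by
    simp only [inner_sub_left, inner_sub_right]
    ring
  linarith [hsplit, real_inner_le_norm (g - g') u, real_inner_le_norm g' (u - v)]

namespace Frobenius

variable {m r : ℕ}

noncomputable def toEuclidean :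
    Matrix (Fin m) (Fin r) ℝ →ₗ[ℝ] EuclideanSpace ℝ (Fin m × Fin r) where
  toFun M := WithLp.toLp 2 fun p => M p.1 p.2
  map_add' _ _ := rfl
  map_smul' _ _ := rfl

@[simp]
lemma toEuclidean_apply (M : Matrix (Fin m) (Fin r) ℝ) (p : Fin m × Fin r) :
    toEuclidean M p = M p.1 p.2 := rfl

lemma frob_eq_norm (M : Matrix (Fin m) (Fin r) ℝ) : frob M = ‖toEuclidean M‖ := by
  rw [EuclideanSpace.norm_eq, frob, Fintype.sum_prod_type]
  simp

lemma matInner_eq_inner (M N : Matrix (Fin m) (Fin r) ℝ) :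
    matInner M N = inner ℝ (toEuclidean M) (toEuclidean N) := by
  rw [matInner, PiLp.inner_apply, Fintype.sum_prod_type]
  simp [mul_comm]

lemma frob_nonneg (M : Matrix (Fin m) (Fin r) ℝ) : 0 ≤ frob M := Real.sqrt_nonneg _

lemma frob_sq (M : Matrix (Fin m) (Fin r) ℝ) : frob M ^ 2 = matInner M M := by
  rw [frob_eq_norm, matInner_eq_inner, real_inner_self_eq_norm_sq]

lemma matInner_le_of_perturb (G U G' V : Matrix (Fin m) (Fin r) ℝ) :
    matInner G U ≤ matInner G' V + frob (G - G') * frob U + frob G' * frob (U - V) := by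
  simpa only [matInner_eq_inner, frob_eq_norm, map_sub] using
    real_inner_le_inner_add_norm_mul _ _ _ _

lemma matInner_mul_orthogonal (M P : Matrix (Fin m) (Fin r) ℝ) {Q : Matrix (Fin r) (Fin r) ℝ}
    (hQ : Q * Qᵀ = 1) : matInner (M * Q) (P * Q) = matInner M P := by
  have htrace (M N : Matrix (Fin m) (Fin r) ℝ) : matInner M N = trace (M * Nᵀ) := by
    simp [matInner, trace, mul_apply]
  rw [htrace, htrace, transpose_mul, Matrix.mul_assoc, ← Matrix.mul_assoc Q, hQ, Matrix.one_mul]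

lemma frob_mul_orthogonal (M : Matrix (Fin m) (Fin r) ℝ) {Q : Matrix (Fin r) (Fin r) ℝ}
    (hQ : Q * Qᵀ = 1) : frob (M * Q) = frob M := by
  rw [← Real.sqrt_sq (frob_nonneg (M * Q)), frob_sq, matInner_mul_orthogonal _ _ hQ, ← frob_sq,
    Real.sqrt_sq (frob_nonneg M)]

lemma matInner_eq_zero_of_support {M N : Matrix (Fin m) (Fin r) ℝ}
    (h : ∀ i j, M i j ≠ 0 → N i j = 0) : matInner N M = 0 :=
  sum_eq_zero fun i _ => sum_eq_zero fun j _ => by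
    by_cases hM : M i j = 0
    · simp [hM]
    · simp [h i j hM]

lemma matInner_smul_add_of_support (c : ℝ) {V N : Matrix (Fin m) (Fin r) ℝ}
    (h : ∀ i j, V i j ≠ 0 → N i j = 0) : matInner (c • V + N) V = c * frob V ^ 2 := by
  rw [frob_sq, matInner_eq_inner, map_add, map_smul, inner_add_left, real_inner_smul_left,
    ← matInner_eq_inner, ← matInner_eq_inner, matInner_eq_zero_of_support h, add_zero]

lemma frob_smul_add_le (c : ℝ) (V N : Matrix (Fin m) (Fin r) ℝ) :
    frob (c • V + N) ≤ |c| * frob V + frob N := by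
  simpa only [frob_eq_norm, map_add, map_smul, norm_smul, Real.norm_eq_abs] using
    norm_add_le (c • toEuclidean V) (toEuclidean N)

end Frobenius

open Frobenius

lemma gradLag_mul_orthogonal {n r : ℕ} (A : Matrix (Fin n) (Fin n) ℝ) (y : Fin n → ℝ)
    (L β : ℝ) (U : Matrix (Fin n) (Fin r) ℝ) {Q : Matrix (Fin r) (Fin r) ℝ} (hQ : Q * Qᵀ = 1) :
    gradLag A y L β (U * Q) = gradLag A y L β U * Q := by
  have hgram : (U * Q) * (U * Q)ᵀ = U * Uᵀ := by
    rw [transpose_mul, Matrix.mul_assoc, ← Matrix.mul_assoc Q, hQ, Matrix.one_mul]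
  rw [gradLag, gradLag, hgram, Matrix.mul_assoc]

theorem grad_inner_negative_near_optimum_general {n r K : ℕ} (hK : 1 ≤ K)
    (A : Matrix (Fin n) (Fin n) ℝ)
    (y : Fin n → ℝ) (L β lam R₁ Gc : ℝ)
    (hlamL : L < lam)
    (Q : Matrix (Fin r) (Fin r) ℝ) (hQ₂ : Q * Qᵀ = 1)
    (Ustar : Matrix (Fin n) (Fin r) ℝ)
    (hUstarF : frob Ustar ^ 2 = (K : ℝ))
    (N : Matrix (Fin n) (Fin r) ℝ)
    (hgUstar : gradLag A y L β Ustar = (-(2 * (lam - L))) • Ustar + N)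
    (hNsupp : ∀ i τ, Ustar i τ ≠ 0 → N i τ = 0)
    (hNF : frob N ≤ Gc)
    (U : Matrix (Fin n) (Fin r) ℝ)
    (hUF : frob U ^ 2 = (K : ℝ))
    (hlip : frob (gradLag A y L β U - gradLag A y L β (Ustar * Q)) ≤
      R₁ * frob (U - Ustar * Q))
    (hclose : frob (U - Ustar * Q) ≤
      (lam - L) * Real.sqrt K /
        (2 * (Real.sqrt K * R₁ + 2 * (lam - L) * Real.sqrt K + Gc))) :
    matInner (gradLag A y L β U) U < -(lam - L) * K / 2 := by
  set g := gradLag A y L β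
  set a := lam - L
  have ha : 0 < a := sub_pos.mpr hlamL
  have hK1 : (1 : ℝ) ≤ K := by exact_mod_cast hK
  have hsqrtK : √(K : ℝ) ≤ K := (Real.sqrt_le_left (by positivity)).mpr (by nlinarith)
  have hfrob (M : Matrix (Fin n) (Fin r) ℝ) (hM : frob M ^ 2 = K) : frob M = √(K : ℝ) := by
    rw [← hM, Real.sqrt_sq (frob_nonneg M)]
  have hgQ : g (Ustar * Q) = g Ustar * Q := gradLag_mul_orthogonal A y L β Ustar hQ₂
  have hinner_opt : matInner (g (Ustar * Q)) (Ustar * Q) = -(2 * a) * K := by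
    rw [hgQ, matInner_mul_orthogonal _ _ hQ₂, hgUstar, matInner_smul_add_of_support _ hNsupp,
      hUstarF]
  have hfrob_opt : frob (g (Ustar * Q)) ≤ 2 * a * √(K : ℝ) + Gc := by
    rw [hgQ, frob_mul_orthogonal _ hQ₂, hgUstar]
    refine (frob_smul_add_le _ _ _).trans ?_
    rw [abs_neg, abs_of_pos (by positivity), hfrob Ustar hUstarF]
    linarith
  set d := frob (U - Ustar * Q)
  have hd : 0 ≤ d := frob_nonneg _
  have hdS := le_half_of_le_div_two_mul hd (by positivity) hclose
  calc matInner (g U) U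
      ≤ matInner (g (Ustar * Q)) (Ustar * Q) + frob (g U - g (Ustar * Q)) * frob U
          + frob (g (Ustar * Q)) * d := matInner_le_of_perturb _ _ _ _
    _ ≤ -(2 * a) * K + R₁ * d * √(K : ℝ) + (2 * a * √(K : ℝ) + Gc) * d := by
        rw [hinner_opt, hfrob U hUF]
        gcongr
    _ ≤ -(2 * a) * K + a * K / 2 := by nlinarith
    _ < -a * K / 2 := by nlinarith

/-- Strict negativity of `⟨g(U), U⟩` near the optimal orbit: if
`‖U*‖_F² = K`, `g(U*) = −2(λ−L)U* + N` with `N` vanishing on the support of `U*` and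
`‖N‖_F ≤ G_c`, `Q` is orthogonal, `‖U‖_F² = K`,
`‖g(U) − g(U*Q)‖_F ≤ R₁‖U − U*Q‖_F`, and
`‖U − U*Q‖_F ≤ (λ−L)√K/(2(√K·R₁ + 2(λ−L)√K + G_c))`, then
`⟨g(U), U⟩ < −(λ−L)K/2`. -/
theorem grad_inner_negative_near_optimum {n r K : ℕ} (hK : 1 ≤ K)
    (A : Matrix (Fin n) (Fin n) ℝ) (hA : Aᵀ = A)
    (y : Fin n → ℝ) (L β lam R₁ Gc : ℝ)
    (hlamL : L < lam) (hR₁ : 0 ≤ R₁) (hGc : 0 ≤ Gc)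
    (Q : Matrix (Fin r) (Fin r) ℝ) (hQ₁ : Qᵀ * Q = 1) (hQ₂ : Q * Qᵀ = 1)
    (Ustar : Matrix (Fin n) (Fin r) ℝ)
    (hUstarF : frob Ustar ^ 2 = (K : ℝ))
    (N : Matrix (Fin n) (Fin r) ℝ)
    (hgUstar : gradLag A y L β Ustar = (-(2 * (lam - L))) • Ustar + N)
    (hNsupp : ∀ i τ, Ustar i τ ≠ 0 → N i τ = 0)
    (hNF : frob N ≤ Gc)
    (U : Matrix (Fin n) (Fin r) ℝ)
    (hUF : frob U ^ 2 = (K : ℝ))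
    (hlip : frob (gradLag A y L β U - gradLag A y L β (Ustar * Q)) ≤
      R₁ * frob (U - Ustar * Q))
    (hclose : frob (U - Ustar * Q) ≤
      (lam - L) * Real.sqrt K /
        (2 * (Real.sqrt K * R₁ + 2 * (lam - L) * Real.sqrt K + Gc))) :
    matInner (gradLag A y L β U) U < -(lam - L) * K / 2 :=
  grad_inner_negative_near_optimum_general hK A y L β lam R₁ Gc hlamL Q hQ₂ Ustar hUstarF N hgUstar
    hNsupp hNF U hUF hlip hclose
end
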